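/- Let F be a finite field, let 2 ≤ l ≤ n, and let M' = (m'_{i,j}) be an n×n upper-triangular matrix over F[x] with det(M') ≠ 0 whose top-left (l−1)×(l−1) block is the diagonal matrix diag(d_1, …, d_{l-1}), and suppose: (i) deg(d_1) ≤ deg(d_2) ≤ ⋯ ≤ deg(d_{l-1}); (ii) x^{deg(d_i)+1} divides m'_{i,l} for all 1 ≤ i ≤ l−1; (iii) deg(m'_{i,l}) + 1 ≤ deg(m'_{l,l}) for all 1 ≤ i ≤ l−1; and (iv) deg(m'_{l,l}) > deg(d_1) + 1. Define M'' = (m''_{i,j}) by m''_{l,l} = m'_{l,l} − T_{deg(d_1)+1}(m'_{l,l}) and m''_{i,j} = m'_{i,j} for all other entries. Then for every natural number k, the set {g ∈ GL_n(F[x]) : gM' satisfies P(k)} equals the set {g ∈ GL_n(F[x]) : gM'' satisfies P(k)}. -/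
import Mathlib


open Polynomial Matrix

/-- The truncation `T_u(f) = Σ_{0 ≤ i ≤ u} a_i x^i` of a polynomial `f = Σ_i a_i x^i`. -/
noncomputable def truncPoly {R : Type*} [CommRing R] (u : ℕ) (f : R[X]) : R[X] :=
  ∑ i ∈ Finset.range (u + 1), Polynomial.C (f.coeff i) * Polynomial.X ^ i

lemma truncPoly_degree_le {R : Type*} [CommRing R] (u : ℕ) (f : R[X]) :
    (truncPoly u f).degree ≤ (u : WithBot ℕ) := by
  refine (Polynomial.degree_sum_le _ _).trans ?_
  refine Finset.sup_le fun i hi => ?_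
  refine (Polynomial.degree_C_mul_X_pow_le _ _).trans ?_
  exact_mod_cast Nat.lt_succ_iff.mp (Finset.mem_range.mp hi)

lemma core14 {F : Type*} [Field F] {n l : ℕ} (k : ℕ) (hl2 : 2 ≤ l) (hln : l ≤ n)
    (M : Matrix (Fin n) (Fin n) F[X]) (e : F[X])
    (c z : Fin n) (hc : (c : ℕ) = l - 1) (hz : (z : ℕ) = 0)
    (hdiagne : ∀ j : Fin n, (j : ℕ) < l - 1 → M j j ≠ 0)
    (hdiag0 : ∀ i j : Fin n, (j : ℕ) < l - 1 → i ≠ j → M i j = 0)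
    (hcol : ∀ i : Fin n, l - 1 < (i : ℕ) → M i c = 0)
    (hasc : ∀ j : Fin n, (j : ℕ) < l - 1 → (M z z).degree ≤ (M j j).degree)
    (hsmall : ∀ j : Fin n, (j : ℕ) < l - 1 → (M j c).degree + 1 ≤ (M c c).degree)
    (he : e.degree ≤ (M z z).degree + 1)
    (hbig : (M z z).degree + 1 < (M c c).degree)
    (g : Fin n → F[X])
    (hk : ∀ j : Fin n, (∑ t, g t * M t j).degree ≤ (k : ℕ)) :
    (g c * e).degree ≤ (k : ℕ) := by
  by_contra hcon
  push_neg at hcon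
  have hprod : g c * e ≠ 0 := by
    intro h0
    rw [h0, Polynomial.degree_zero] at hcon
    exact absurd hcon (by simp)
  have hgc : g c ≠ 0 := fun h => hprod (by rw [h, zero_mul])
  have he0 : e ≠ 0 := fun h => hprod (by rw [h, mul_zero])
  have hd1 : M z z ≠ 0 := hdiagne z (by omega)
  have hMcc : M c c ≠ 0 := by
    intro h0
    rw [h0, Polynomial.degree_zero] at hbig
    exact absurd hbig (by simp)
  -- key1 : k < deg (g c * M c c)
  have key1 : (k : WithBot ℕ) < (g c * M c c).degree := by
    refine lt_of_lt_of_le hcon ?_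
    rw [Polynomial.degree_mul, Polynomial.degree_mul]
    refine le_of_lt ?_
    refine WithBot.add_lt_add_left (by simp [Polynomial.degree_eq_natDegree hgc]) ?_
    exact lt_of_le_of_lt he hbig
  -- g c * M c c expressed from column c
  have hsplit : g c * M c c = (∑ t, g t * M t c) - ∑ t ∈ Finset.univ.erase c, g t * M t c := by
    rw [eq_sub_iff_add_eq]
    exact Finset.add_sum_erase _ (fun t => g t * M t c) (Finset.mem_univ c)
  have hle : (g c * M c c).degree ≤ (∑ t ∈ Finset.univ.erase c, g t * M t c).degree := by
    have hmax : (g c * M c c).degree ≤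
        max (∑ t, g t * M t c).degree (∑ t ∈ Finset.univ.erase c, g t * M t c).degree := by
      rw [hsplit]; exact Polynomial.degree_sub_le _ _
    rcases le_max_iff.mp hmax with h | h
    · exact absurd (key1.trans_le (h.trans (hk c))) (lt_irrefl _)
    · exact h
  -- extract a witness t
  have hsup : (∑ t ∈ Finset.univ.erase c, g t * M t c).degree ≤
      (Finset.univ.erase c).sup fun t => (g t * M t c).degree :=
    Polynomial.degree_sum_le _ _
  have hbot : (⊥ : WithBot ℕ) < (g c * M c c).degree := lt_of_le_of_lt bot_le key1
  obtain ⟨t, htmem, htle⟩ := (Finset.le_sup_iff hbot).mp (hle.trans hsup)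
  have htc : t ≠ c := Finset.ne_of_mem_erase htmem
  have hgtMtc : g t * M t c ≠ 0 := by
    intro h0
    rw [h0, Polynomial.degree_zero] at htle
    exact absurd (lt_of_lt_of_le hbot htle) (by simp)
  have hgt : g t ≠ 0 := fun h => hgtMtc (by rw [h, zero_mul])
  have hMtc : M t c ≠ 0 := fun h => hgtMtc (by rw [h, mul_zero])
  have htl : (t : ℕ) < l - 1 := by
    rcases lt_trichotomy ((t : ℕ)) (l - 1) with h | h | h
    · exact h
    · exact absurd (Fin.ext (h.trans hc.symm)) htc
    · exact absurd (hcol t h) hMtc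
  -- column t gives bound on g t
  have hcolt : (∑ s, g s * M s t) = g t * M t t := by
    refine Finset.sum_eq_single_of_mem t (Finset.mem_univ t) fun s _ hst => ?_
    rw [hdiag0 s t htl hst, mul_zero]
  have H1 : (g t * M t t).degree ≤ (k : ℕ) := by rw [← hcolt]; exact hk t
  -- move to natural numbers
  have hMtt : M t t ≠ 0 := hdiagne t htl
  rw [Polynomial.degree_mul, Polynomial.degree_eq_natDegree hgt,
    Polynomial.degree_eq_natDegree hMtt] at H1
  rw [Polynomial.degree_mul, Polynomial.degree_mul, Polynomial.degree_eq_natDegree hgc,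
    Polynomial.degree_eq_natDegree hMcc, Polynomial.degree_eq_natDegree hgt,
    Polynomial.degree_eq_natDegree hMtc] at htle
  have H3 := hsmall t htl
  rw [Polynomial.degree_eq_natDegree hMtc, Polynomial.degree_eq_natDegree hMcc] at H3
  have H4 := he
  rw [Polynomial.degree_eq_natDegree he0, Polynomial.degree_eq_natDegree hd1] at H4
  have H5 := hasc t htl
  rw [Polynomial.degree_eq_natDegree hd1, Polynomial.degree_eq_natDegree hMtt] at H5
  rw [Polynomial.degree_mul, Polynomial.degree_eq_natDegree hgc,
    Polynomial.degree_eq_natDegree he0] at hcon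
  have h1 : (g t).natDegree + (M t t).natDegree ≤ k := by exact_mod_cast H1
  have h2 : (g c).natDegree + (M c c).natDegree ≤ (g t).natDegree + (M t c).natDegree := by
    exact_mod_cast htle
  have h3 : (M t c).natDegree + 1 ≤ (M c c).natDegree := by exact_mod_cast H3
  have h4 : e.natDegree ≤ (M z z).natDegree + 1 := by exact_mod_cast H4
  have h5 : (M z z).natDegree ≤ (M t t).natDegree := by exact_mod_cast H5
  have h6 : k < (g c).natDegree + e.natDegree := by exact_mod_cast hcon
  omega

/-- Let `M'` be an upper-triangular `n × n` matrix over `F[x]` with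
`det M' ≠ 0` whose top-left `(l-1) × (l-1)` block is `diag(d₁, …, d_{l-1})`, and suppose:
(i) `deg d₁ ≤ ⋯ ≤ deg d_{l-1}`; (ii) `x^{deg d_i + 1} ∣ m'_{i,l}` for `1 ≤ i ≤ l-1`;
(iii) `deg m'_{i,l} + 1 ≤ deg m'_{l,l}` for `1 ≤ i ≤ l-1`; (iv) `deg m'_{l,l} > deg d₁ + 1`.
Replacing `m'_{l,l}` by `m'_{l,l} - T_{deg d₁ + 1}(m'_{l,l})` does not change the set of
`g ∈ GL_n(F[x])` such that `gM'` satisfies `P(k)`, for any `k`. -/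
theorem stmt_14 (F : Type*) [Field F] [Fintype F]
    (n l : ℕ) (hl2 : 2 ≤ l) (hln : l ≤ n)
    (M' : Matrix (Fin n) (Fin n) F[X])
    (htri : ∀ i j : Fin n, (j : ℕ) < (i : ℕ) → M' i j = 0)
    (hdet : M'.det ≠ 0)
    (hdiag : ∀ i j : Fin n, (i : ℕ) < l - 1 → (j : ℕ) < l - 1 → i ≠ j → M' i j = 0)
    (hasc : ∀ i j : Fin n, (i : ℕ) ≤ (j : ℕ) → (j : ℕ) < l - 1 →
      (M' i i).degree ≤ (M' j j).degree)
    (hdvd : ∀ i : Fin n, (i : ℕ) < l - 1 →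
      (Polynomial.X : F[X]) ^ ((M' i i).natDegree + 1) ∣ M' i ⟨l - 1, by omega⟩)
    (hsmall : ∀ i : Fin n, (i : ℕ) < l - 1 →
      (M' i ⟨l - 1, by omega⟩).degree + 1 ≤ (M' ⟨l - 1, by omega⟩ ⟨l - 1, by omega⟩).degree)
    (hbig : (M' ⟨0, by omega⟩ ⟨0, by omega⟩).degree + 1 <
      (M' ⟨l - 1, by omega⟩ ⟨l - 1, by omega⟩).degree)
    (M'' : Matrix (Fin n) (Fin n) F[X])
    (hM'' : ∀ i j : Fin n, M'' i j =
      if (i : ℕ) = l - 1 ∧ (j : ℕ) = l - 1 then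
        M' i j - truncPoly ((M' ⟨0, by omega⟩ ⟨0, by omega⟩).natDegree + 1) (M' i j)
      else M' i j) :
    ∀ k : ℕ,
      {g : GL (Fin n) F[X] |
          ∀ i j, (((g : Matrix (Fin n) (Fin n) F[X]) * M') i j).degree ≤ (k : ℕ)} =
      {g : GL (Fin n) F[X] |
          ∀ i j, (((g : Matrix (Fin n) (Fin n) F[X]) * M'') i j).degree ≤ (k : ℕ)} := by
  intro k
  have hl1 : 1 ≤ l - 1 := by omega
  set c : Fin n := ⟨l - 1, by omega⟩ with hcdef
  set z : Fin n := ⟨0, by omega⟩ with hzdef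
  set e : F[X] := truncPoly ((M' z z).natDegree + 1) (M' c c) with hedef
  -- all diagonal entries nonzero
  have hut : M'.BlockTriangular id := fun i j hij => htri i j hij
  have hdne : ∀ i : Fin n, M' i i ≠ 0 := by
    intro i hi0
    rw [Matrix.det_of_upperTriangular hut] at hdet
    exact hdet (Finset.prod_eq_zero (Finset.mem_univ i) hi0)
  have hzc : z ≠ c := by
    intro h
    have := congrArg (Fin.val) h
    simp only [hcdef, hzdef] at this
    omega
  -- M'' off the (c,c) entry
  have hoff : ∀ i j : Fin n, (i ≠ c ∨ j ≠ c) → M'' i j = M' i j := by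
    intro i j hij
    rw [hM'']
    rw [if_neg]
    rintro ⟨h1, h2⟩
    rcases hij with h | h
    · exact h (Fin.ext h1)
    · exact h (Fin.ext h2)
  have hMcc'' : M'' c c = M' c c - e := by
    rw [hM'', if_pos ⟨rfl, rfl⟩]
  -- e facts
  have he' : e.degree ≤ (M' z z).degree + 1 := by
    refine (truncPoly_degree_le _ _).trans ?_
    rw [Polynomial.degree_eq_natDegree (hdne z)]
    exact_mod_cast le_rfl
  have helt : e.degree < (M' c c).degree := lt_of_le_of_lt he' hbig
  have hdeg'' : (M'' c c).degree = (M' c c).degree := by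
    rw [hMcc'']
    exact Polynomial.degree_sub_eq_left_of_degree_lt helt
  -- combined diag-zero hypothesis
  have hdiag0 : ∀ i j : Fin n, (j : ℕ) < l - 1 → i ≠ j → M' i j = 0 := by
    intro i j hj hij
    rcases lt_or_ge ((i : ℕ)) (l - 1) with h | h
    · exact hdiag i j h hj hij
    · exact htri i j (by omega)
  have hcol : ∀ i : Fin n, l - 1 < (i : ℕ) → M' i c = 0 := fun i hi => htri i c hi
  have hasc' : ∀ j : Fin n, (j : ℕ) < l - 1 → (M' z z).degree ≤ (M' j j).degree :=
    fun j hj => hasc z j (by simp [hzdef]) hj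
  -- hypotheses for M''
  have hjnec : ∀ j : Fin n, (j : ℕ) < l - 1 → j ≠ c := by
    intro j hj h
    rw [h] at hj
    simp [hcdef] at hj
  have hdne'' : ∀ j : Fin n, (j : ℕ) < l - 1 → M'' j j ≠ 0 := by
    intro j hj
    rw [hoff j j (Or.inl (hjnec j hj))]
    exact hdne j
  have hinec : ∀ i : Fin n, l - 1 < (i : ℕ) → i ≠ c := by
    intro i hi h
    rw [h] at hi
    simp [hcdef] at hi
  have hdiag0'' : ∀ i j : Fin n, (j : ℕ) < l - 1 → i ≠ j → M'' i j = 0 := by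
    intro i j hj hij
    rw [hoff i j (Or.inr (hjnec j hj))]
    exact hdiag0 i j hj hij
  have hcol'' : ∀ i : Fin n, l - 1 < (i : ℕ) → M'' i c = 0 := by
    intro i hi
    rw [hoff i c (Or.inl (hinec i hi))]
    exact hcol i hi
  have hMzz'' : M'' z z = M' z z := hoff z z (Or.inl hzc)
  have hasc'' : ∀ j : Fin n, (j : ℕ) < l - 1 → (M'' z z).degree ≤ (M'' j j).degree := by
    intro j hj
    rw [hMzz'', hoff j j (Or.inl (hjnec j hj))]
    exact hasc' j hj
  have hsmall'' : ∀ j : Fin n, (j : ℕ) < l - 1 → (M'' j c).degree + 1 ≤ (M'' c c).degree := by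
    intro j hj
    rw [hoff j c (Or.inl (hjnec j hj)), hdeg'']
    exact hsmall j hj
  have he'' : e.degree ≤ (M'' z z).degree + 1 := by rw [hMzz'']; exact he'
  have hbig'' : (M'' z z).degree + 1 < (M'' c c).degree := by rw [hMzz'', hdeg'']; exact hbig
  -- sum identity
  have hsum : ∀ g : Fin n → F[X],
      (∑ t, g t * M'' t c) = (∑ t, g t * M' t c) - g c * e := by
    intro g
    have hterm : ∀ t : Fin n, g t * M'' t c
        = g t * M' t c - (if t = c then g c * e else 0) := by
      intro t
      by_cases ht : t = c
      · subst ht; rw [hMcc'', if_pos rfl]; ring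
      · rw [hoff t c (Or.inl ht), if_neg ht]; ring
    rw [Finset.sum_congr rfl (fun t _ => hterm t), Finset.sum_sub_distrib,
      Finset.sum_ite_eq' Finset.univ c (fun _ => g c * e), if_pos (Finset.mem_univ c)]
  ext g
  simp only [Set.mem_setOf_eq]
  constructor
  · intro h i j
    have hcore : ((g : Matrix (Fin n) (Fin n) F[X]) i c * e).degree ≤ (k : ℕ) :=
      core14 k hl2 hln M' e c z rfl rfl (fun j _ => hdne j) hdiag0 hcol hasc' hsmall
        he' hbig (fun t => (g : Matrix (Fin n) (Fin n) F[X]) i t)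
        (fun j => by rw [← Matrix.mul_apply]; exact h i j)
    rw [Matrix.mul_apply]
    by_cases hj : j = c
    · subst hj
      rw [hsum]
      refine (Polynomial.degree_sub_le _ _).trans (max_le ?_ hcore)
      rw [← Matrix.mul_apply]
      exact h i c
    · have : (∑ t, (g : Matrix (Fin n) (Fin n) F[X]) i t * M'' t j)
          = ∑ t, (g : Matrix (Fin n) (Fin n) F[X]) i t * M' t j := by
        refine Finset.sum_congr rfl fun t _ => ?_
        rw [hoff t j (Or.inr hj)]
      rw [this, ← Matrix.mul_apply]
      exact h i j
  · intro h i j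
    have hcore : ((g : Matrix (Fin n) (Fin n) F[X]) i c * e).degree ≤ (k : ℕ) :=
      core14 k hl2 hln M'' e c z rfl rfl hdne'' hdiag0'' hcol'' hasc'' hsmall''
        he'' hbig'' (fun t => (g : Matrix (Fin n) (Fin n) F[X]) i t)
        (fun j => by rw [← Matrix.mul_apply]; exact h i j)
    rw [Matrix.mul_apply]
    by_cases hj : j = c
    · subst hj
      have : (∑ t, (g : Matrix (Fin n) (Fin n) F[X]) i t * M' t c)
          = (∑ t, (g : Matrix (Fin n) (Fin n) F[X]) i t * M'' t c)
            + (g : Matrix (Fin n) (Fin n) F[X]) i c * e := by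
        rw [hsum]; ring
      rw [this]
      refine (Polynomial.degree_add_le _ _).trans (max_le ?_ hcore)
      rw [← Matrix.mul_apply]
      exact h i c
    · have : (∑ t, (g : Matrix (Fin n) (Fin n) F[X]) i t * M' t j)
          = ∑ t, (g : Matrix (Fin n) (Fin n) F[X]) i t * M'' t j := by
        refine Finset.sum_congr rfl fun t _ => ?_
        rw [hoff t j (Or.inr hj)]
      rw [this, ← Matrix.mul_apply]
      exact h i j
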